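/- For all positive integers m and n, the zero forcing number and the 1-leaky forcing number of the Hopi rectangle graph HD(m,n) are equal, and both equal m + n, i.e., Z(HD(m,n)) = Z_{(1)}(HD(m,n)) = m + n. -/

import Mathlib

/-- One round of the zero forcing color change rule, where vertices in the
leak set `L` are not permitted to force. A blue vertex `u ∉ L` with exactly one
non-blue neighbor `v` turns `v` blue. -/
def zfStep {V : Type*} (G : SimpleGraph V) (L : Set V) (B : Set V) : Set V :=
  B ∪ {v | ∃ u ∈ B, u ∉ L ∧ G.Adj u v ∧ ∀ w, G.Adj u w → w ∉ B → w = v}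

/-- The set of vertices eventually colored blue starting from `B`, with leaks `L`. -/
def zfClosure {V : Type*} (G : SimpleGraph V) (L : Set V) (B : Set V) : Set V :=
  ⋃ k, (zfStep G L)^[k] B

/-- `B` is an `ℓ`-leaky forcing set: for every leak set of size at most `ℓ`,
starting with exactly `B` blue, eventually every vertex becomes blue. -/
def IsLeakyForcingSet {V : Type*} (G : SimpleGraph V) (ℓ : ℕ) (B : Set V) : Prop :=
  ∀ L : Set V, L.ncard ≤ ℓ → zfClosure G L B = Set.univ

/-- `B` is a zero forcing set (no leaks). -/
def IsZeroForcingSet {V : Type*} (G : SimpleGraph V) (B : Set V) : Prop :=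
  zfClosure G (∅ : Set V) B = Set.univ

/-- The zero forcing number `Z(G)`: minimum cardinality of a zero forcing set. -/
noncomputable def zfNumber {V : Type*} (G : SimpleGraph V) : ℕ :=
  sInf (Set.ncard '' {B : Set V | IsZeroForcingSet G B})

/-- The `ℓ`-leaky forcing number `Z_(ℓ)(G)`: minimum cardinality of an
`ℓ`-leaky forcing set. -/
noncomputable def leakyNumber {V : Type*} (G : SimpleGraph V) (ℓ : ℕ) : ℕ :=
  sInf (Set.ncard '' {B : Set V | IsLeakyForcingSet G ℓ B})

/-- The vertex set of the Hopi rectangle graph of order `(m,n)`: the set of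
integer lattice points `(i,j)` with `m-1 ≤ i+j ≤ 2n+m-1` and `|i-j| ≤ m`
(realized as a `Finset` by filtering a sufficiently large box). -/
noncomputable def HDverts (m n : ℕ) : Finset (ℤ × ℤ) :=
  (Finset.Icc (-2 : ℤ) (2*n + 2*m) ×ˢ Finset.Icc (-2 : ℤ) (2*n + 2*m)).filter
    (fun p => (m : ℤ) - 1 ≤ p.1 + p.2 ∧ p.1 + p.2 ≤ 2*n + m - 1 ∧ |p.1 - p.2| ≤ m)

/-- The Hopi rectangle graph `HD(m,n)`: vertices are the points of `HDverts m n`,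
and `(i,j)` is adjacent to `(i',j')` iff `|i - i'| + |j - j'| = 1`. -/
def HD (m n : ℕ) : SimpleGraph {p : ℤ × ℤ // p ∈ HDverts m n} where
  Adj u v := |u.val.1 - v.val.1| + |u.val.2 - v.val.2| = 1
  symm := by
    constructor
    intro u v h
    beta_reduce at h ⊢
    rw [abs_sub_comm v.val.1 u.val.1, abs_sub_comm v.val.2 u.val.2]
    exact h
  loopless := by constructor; intro u h; simp at h

/-!
The left endpoints of the `m + n` rows `j = 0, …, m + n - 1` form a `1`-leaky forcing set.
Sweeping every row from left to right forces all vertices outside the cone `i > a + |j - b|`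
to the right of a leak `(a, b)`. On one side of the leak (above or below it, according to the
parity of `a + b + m`) the edge of the cone is then forced cell by cell from the row beyond,
starting at the border of `HD m n`, and a second sweep forces the rest of the cone.

Conversely, the `n` antidiagonals `i + j = m + 2k` and the `m` diagonals `i - j = 2k + 1 - m`
are forts, pairwise disjoint since `i + j` and `i - j` have the same parity, and a zero forcing
set meets every fort.
-/

namespace SimpleGraph

variable {V : Type*}

inductive Forced (G : SimpleGraph V) (L B : Set V) : V → Prop
  | base {v : V} : v ∈ B → Forced G L B v
  | force {u v : V} : Forced G L B u → u ∉ L → G.Adj u v →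
      (∀ w, G.Adj u w → w ≠ v → Forced G L B w) → Forced G L B v

variable (G : SimpleGraph V)

def IsFort (F : Set V) : Prop :=
  F.Nonempty ∧ ∀ v ∉ F, ∀ u ∈ F, G.Adj v u → ∃ w ∈ F, w ≠ u ∧ G.Adj v w

variable {G} {L B F : Set V}

lemma exists_zfClosure_eq_iterate [Finite V] : ∃ k, zfClosure G L B = (zfStep G L)^[k] B := by
  have hmono : Monotone fun k => (zfStep G L)^[k] B := fun k l hkl =>
    Function.monotone_iterate_of_id_le (fun _ => Set.subset_union_left) hkl B
  obtain ⟨k, hk⟩ := WellFoundedGT.monotone_chain_condition ⟨_, hmono⟩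
  refine ⟨k, (Set.iUnion_subset fun l => ?_).antisymm
    (Set.subset_iUnion (fun l => (zfStep G L)^[l] B) k)⟩
  rcases le_total l k with hl | hl
  · exact hmono hl
  · exact (hk l hl).ge

lemma zfStep_zfClosure_subset [Finite V] : zfStep G L (zfClosure G L B) ⊆ zfClosure G L B := by
  obtain ⟨k, hk⟩ := exists_zfClosure_eq_iterate (G := G) (L := L) (B := B)
  calc zfStep G L (zfClosure G L B) = (zfStep G L)^[k + 1] B := by
        rw [hk, Function.iterate_succ_apply']
    _ ⊆ zfClosure G L B := Set.subset_iUnion (fun l => (zfStep G L)^[l] B) (k + 1)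

lemma Forced.mem_zfClosure [Finite V] {v : V} (h : G.Forced L B v) : v ∈ zfClosure G L B := by
  induction h with
  | base hv => exact Set.mem_iUnion.mpr ⟨0, hv⟩
  | force _ huL hadj _ ihu ihw =>
    refine zfStep_zfClosure_subset (Or.inr ⟨_, ihu, huL, hadj, fun w hw hwB => ?_⟩)
    by_contra hwv
    exact hwB (ihw w hw hwv)

lemma IsFort.disjoint_zfStep {S : Set V} (hF : G.IsFort F) (hS : Disjoint S F) :
    Disjoint (zfStep G L S) F := by
  rw [Set.disjoint_left]
  rintro v (hvS | ⟨u, huS, -, huv, huniq⟩) hvF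
  · exact Set.disjoint_left.mp hS hvS hvF
  · obtain ⟨w, hwF, hwv, huw⟩ := hF.2 u (Set.disjoint_left.mp hS huS) v hvF huv
    exact hwv (huniq w huw (Set.disjoint_right.mp hS hwF))

lemma IsFort.inter_nonempty (hF : G.IsFort F) (hB : IsZeroForcingSet G B) :
    (B ∩ F).Nonempty := by
  rw [← Set.not_disjoint_iff_nonempty_inter]
  intro hBF
  have hdisj : ∀ k, Disjoint ((zfStep G ∅)^[k] B) F := by
    intro k
    induction k with
    | zero => exact hBF
    | succ k ih => exact Function.iterate_succ_apply' (zfStep G ∅) k B ▸ hF.disjoint_zfStep ih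
  obtain ⟨v, hv⟩ := hF.1
  obtain ⟨k, hk⟩ := Set.mem_iUnion.mp (hB ▸ Set.mem_univ v : v ∈ zfClosure G ∅ B)
  exact Set.disjoint_left.mp (hdisj k) hk hv

end SimpleGraph

open SimpleGraph

section ForcingSets

variable {V : Type*} {G : SimpleGraph V} {B : Set V}

lemma IsZeroForcingSet.card_le_ncard [Finite V] {ι : Type*} {F : ι → Set V}
    (hF : ∀ k, G.IsFort (F k)) (hdisj : Pairwise (Function.onFun Disjoint F))
    (hB : IsZeroForcingSet G B) : Nat.card ι ≤ B.ncard := by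
  choose f hfB hfF using fun k => (hF k).inter_nonempty hB
  have hinj : Function.Injective f := fun k l hkl =>
    hdisj.eq (Set.not_disjoint_iff.mpr ⟨f k, hfF k, hkl ▸ hfF l⟩)
  rw [← Set.ncard_univ]
  exact Set.ncard_le_ncard_of_injOn f (fun k _ => hfB k) hinj.injOn

lemma IsLeakyForcingSet.isZeroForcingSet {ℓ : ℕ} (hB : IsLeakyForcingSet G ℓ B) :
    IsZeroForcingSet G B :=
  hB ∅ (by simp)

end ForcingSets

lemma Int.abs_sub_add_abs_sub_eq_one_iff {p q : ℤ × ℤ} :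
    |p.1 - q.1| + |p.2 - q.2| = 1 ↔
      q = (p.1 + 1, p.2) ∨ q = (p.1 - 1, p.2) ∨ q = (p.1, p.2 + 1) ∨ q = (p.1, p.2 - 1) := by
  obtain ⟨x, y⟩ := p
  obtain ⟨x', y'⟩ := q
  simp only [Prod.mk.injEq, abs_eq_max_neg]
  omega

namespace HD

variable {m n : ℕ}

abbrev Vertex (m n : ℕ) := {p : ℤ × ℤ // p ∈ HDverts m n}

lemma mem_HDverts {i j : ℤ} :
    (i, j) ∈ HDverts m n ↔
      (m : ℤ) - 1 ≤ i + j ∧ i + j ≤ 2 * n + m - 1 ∧ -(m : ℤ) ≤ i - j ∧ i - j ≤ m := by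
  simp only [HDverts, Finset.mem_filter, Finset.mem_product, Finset.mem_Icc, abs_le]
  exact ⟨fun h => h.2, fun h => ⟨by omega, h⟩⟩

/-- The first coordinate of the left endpoint of row `j`. -/
def rowStart (m : ℕ) (j : ℤ) : ℤ := max ((m : ℤ) - 1 - j) (j - m)

def rowStartVertex (m n : ℕ) (k : Fin (m + n)) : Vertex m n :=
  ⟨(rowStart m k, k), mem_HDverts.mpr (by have := k.2; unfold rowStart; omega)⟩

def rowStarts (m n : ℕ) : Set (Vertex m n) := Set.range (rowStartVertex m n)

lemma ncard_rowStarts : (rowStarts m n).ncard = m + n := by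
  refine (Set.ncard_range_of_injective fun k l hkl => ?_).trans (Nat.card_fin _)
  have : ((k : ℕ) : ℤ) = l := congrArg (fun v : Vertex m n => v.1.2) hkl
  exact Fin.ext (by exact_mod_cast this)

/-- Forcedness of a lattice point, vacuous off the vertex set. -/
def ForcedAt (L : Set (Vertex m n)) (p : ℤ × ℤ) : Prop :=
  ∀ hp : p ∈ HDverts m n, Forced (HD m n) L (rowStarts m n) ⟨p, hp⟩

section Forcing

variable {L : Set (Vertex m n)} {a b : ℤ}

lemma forcedAt_rowStart (j : ℤ) : ForcedAt L (rowStart m j, j) := by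
  intro hp
  have := mem_HDverts.mp hp
  unfold rowStart at this
  have hj : 0 ≤ j := by omega
  exact Forced.base ⟨⟨j.toNat, by omega⟩, Subtype.ext (by simp [rowStartVertex, hj])⟩

lemma ForcedAt.of_force (hL : ∀ v ∈ L, v.1 = (a, b)) {u v : ℤ × ℤ} (hu : u ∈ HDverts m n)
    (hub : u ≠ (a, b)) (hfu : ForcedAt L u) (huv : |u.1 - v.1| + |u.2 - v.2| = 1)
    (hnb : ∀ w : ℤ × ℤ, |u.1 - w.1| + |u.2 - w.2| = 1 → w ≠ v → ForcedAt L w) :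
    ForcedAt L v := fun _ =>
  Forced.force (hfu hu) (fun huL => hub (hL _ huL)) huv fun w huw hwv =>
    hnb w.1 huw (fun h => hwv (Subtype.ext h)) w.2

/-- `(i - 1, j)` forces `(i, j)`. -/
lemma ForcedAt.of_left (hL : ∀ v ∈ L, v.1 = (a, b)) {i j : ℤ} (hrow : i ≠ rowStart m j)
    (hleak : ¬(i - 1 = a ∧ j = b)) (h₁ : ForcedAt L (i - 1, j)) (h₂ : ForcedAt L (i - 2, j))
    (h₃ : ForcedAt L (i - 1, j + 1)) (h₄ : ForcedAt L (i - 1, j - 1)) : ForcedAt L (i, j) := by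
  intro hp
  have := mem_HDverts.mp hp
  refine ForcedAt.of_force hL (u := (i - 1, j)) ?_ (by simpa using hleak) h₁ ?_ ?_ hp
  · rw [mem_HDverts]; unfold rowStart at hrow; omega
  · simp
  · intro w huw hwv
    rcases Int.abs_sub_add_abs_sub_eq_one_iff.mp huw with rfl | rfl | rfl | rfl
    · simp at hwv
    · simpa [sub_sub] using h₂
    · exact h₃
    · exact h₄

lemma forcedAt_of_le_cone (hL : ∀ v ∈ L, v.1 = (a, b)) (i j : ℤ) (hc : i ≤ a + |j - b|) :
    ForcedAt L (i, j) := by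
  suffices ∀ k : ℕ, ∀ i j : ℤ, i < k → i ≤ a + |j - b| → ForcedAt L (i, j) from
    this (i.toNat + 1) i j (by omega) hc
  intro k
  induction k with
  | zero => intro i j hi _ hp; have := mem_HDverts.mp hp; omega
  | succ k ih =>
    intro i j hi hc
    by_cases hrow : i = rowStart m j
    · exact hrow ▸ forcedAt_rowStart j
    rw [abs_eq_max_neg] at hc
    refine ForcedAt.of_left hL hrow (by omega) (ih _ _ ?_ ?_) (ih _ _ ?_ ?_) (ih _ _ ?_ ?_)
      (ih _ _ ?_ ?_) <;> first | omega | (rw [abs_eq_max_neg]; omega)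

/-- The edge of the cone on the `δ` side of the leak: its cell in row `j` is forced by the
cell `(a + 1 + |j - b|, j + δ)` outside the cone, once the edge cell of row `j + δ` is known.
The parity condition keeps these forcers inside `HD m n` all the way to its border. -/
lemma forcedAt_coneEdge (hL : ∀ v ∈ L, v.1 = (a, b)) (hab : (a, b) ∈ HDverts m n) {δ : ℤ}
    (hδ : δ = 1 ∧ (a + b + m) % 2 = 1 ∨ δ = -1 ∧ (a + b + m) % 2 = 0) (j : ℤ)
    (hj : |j + δ - b| = |j - b| + 1) : ForcedAt L (a + 1 + |j - b|, j) := by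
  have hab' := mem_HDverts.mp hab
  suffices ∀ s : ℕ, ∀ j : ℤ, (m + n : ℤ) ≤ |j - b| + s → |j + δ - b| = |j - b| + 1 →
      ForcedAt L (a + 1 + |j - b|, j) from
    this (m + n) j (by have := abs_nonneg (j - b); omega) hj
  intro s
  induction s with
  | zero =>
    intro j hs _ hp
    have := mem_HDverts.mp hp
    simp only [abs_eq_max_neg] at hs this
    omega
  | succ s ih =>
    intro j hs hj hp
    have hv := mem_HDverts.mp hp
    refine ForcedAt.of_force hL (u := (a + 1 + |j - b|, j + δ)) ?_ ?_
      (forcedAt_of_le_cone hL _ _ (by rw [hj]; omega)) ?_ ?_ hp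
    · rw [mem_HDverts]
      simp only [abs_eq_max_neg] at *
      omega
    · simp only [ne_eq, Prod.mk.injEq, not_and]
      have := abs_nonneg (j - b)
      omega
    · rcases hδ with ⟨rfl, -⟩ | ⟨rfl, -⟩ <;> simp
    · intro w huw hwv
      rcases Int.abs_sub_add_abs_sub_eq_one_iff.mp huw with rfl | rfl | rfl | rfl
      · have := ih (j + δ) (by omega) (by simp only [abs_eq_max_neg] at *; omega)
        rwa [hj, ← add_assoc] at this
      all_goals
        simp only [ne_eq, Prod.mk.injEq, true_and] at hwv
        exact forcedAt_of_le_cone hL _ _ (by simp only [abs_eq_max_neg] at *; omega)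

lemma forcedAt_of_single_leak (hL : ∀ v ∈ L, v.1 = (a, b)) (hab : (a, b) ∈ HDverts m n)
    (p : ℤ × ℤ) : ForcedAt L p := by
  obtain ⟨δ, hδ⟩ : ∃ δ : ℤ, δ = 1 ∧ (a + b + m) % 2 = 1 ∨ δ = -1 ∧ (a + b + m) % 2 = 0 := by
    rcases Int.emod_two_eq (a + b + m) with h | h
    exacts [⟨-1, .inr ⟨rfl, h⟩⟩, ⟨1, .inl ⟨rfl, h⟩⟩]
  have hab' := mem_HDverts.mp hab
  suffices ∀ k : ℕ, ∀ i j : ℤ, i < k → ForcedAt L (i, j) from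
    this (p.1.toNat + 1) p.1 p.2 (by omega)
  intro k
  induction k with
  | zero => intro i j hi hp; have := mem_HDverts.mp hp; omega
  | succ k ih =>
    intro i j hi
    by_cases hc : i ≤ a + |j - b|
    · exact forcedAt_of_le_cone hL i j hc
    by_cases hedge : i = a + 1 + |j - b| ∧ |j + δ - b| = |j - b| + 1
    · exact hedge.1 ▸ forcedAt_coneEdge hL hab hδ j hedge.2
    simp only [abs_eq_max_neg] at hc hedge
    refine ForcedAt.of_left hL ?_ ?_ (ih _ _ ?_) (ih _ _ ?_) (ih _ _ ?_) (ih _ _ ?_) <;>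
      (try unfold rowStart) <;> omega

end Forcing

lemma isLeakyForcingSet_rowStarts : IsLeakyForcingSet (HD m n) 1 (rowStarts m n) := by
  intro L hL
  refine Set.eq_univ_of_forall fun v => Forced.mem_zfClosure ?_
  obtain ⟨⟨⟨a, b⟩, hab⟩, hℓ⟩ : ∃ ℓ : Vertex m n, ∀ w ∈ L, w = ℓ := by
    rcases L.eq_empty_or_nonempty with rfl | ⟨ℓ, hℓ⟩
    · exact ⟨v, by simp⟩
    · exact ⟨ℓ, fun w hw => (Set.ncard_le_one (s := L)).mp hL w hw ℓ hℓ⟩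
  exact forcedAt_of_single_leak (fun w hw => congrArg Subtype.val (hℓ w hw)) hab v.1 v.2

def antidiagonal (m n k : ℕ) : Set (Vertex m n) := {v | v.1.1 + v.1.2 = m + 2 * k}

def diagonal (m n k : ℕ) : Set (Vertex m n) := {v | v.1.1 - v.1.2 = 2 * k + 1 - m}

lemma isFort_antidiagonal {k : ℕ} (hk : k < n) : (HD m n).IsFort (antidiagonal m n k) := by
  refine ⟨⟨⟨(m + k, k), mem_HDverts.mpr (by omega)⟩,
    show (m + k + k : ℤ) = m + 2 * k by ring⟩, ?_⟩
  rintro ⟨⟨x, y⟩, hv⟩ hvF ⟨⟨x', y'⟩, hu⟩ huF hvu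
  have := mem_HDverts.mp hv
  have := mem_HDverts.mp hu
  have hvu' := Int.abs_sub_add_abs_sub_eq_one_iff.mp hvu
  simp only [antidiagonal, Set.mem_ofPred_eq, Prod.mk.injEq] at hvF huF hvu'
  refine ⟨⟨(x + (y' - y), y + (x' - x)), mem_HDverts.mpr (by omega)⟩,
    by simp only [antidiagonal, Set.mem_ofPred_eq]; omega, fun h => ?_, ?_⟩
  · have := congrArg (fun w : Vertex m n => w.1.1) h
    simp only at this
    omega
  · exact Int.abs_sub_add_abs_sub_eq_one_iff.mpr (by simp only [Prod.mk.injEq]; omega)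

lemma isFort_diagonal {k : ℕ} (hk : k < m) : (HD m n).IsFort (diagonal m n k) := by
  refine ⟨⟨⟨(k, m - 1 - k), mem_HDverts.mpr (by omega)⟩,
    show (k - (m - 1 - k) : ℤ) = 2 * k + 1 - m by ring⟩, ?_⟩
  rintro ⟨⟨x, y⟩, hv⟩ hvF ⟨⟨x', y'⟩, hu⟩ huF hvu
  have := mem_HDverts.mp hv
  have := mem_HDverts.mp hu
  have hvu' := Int.abs_sub_add_abs_sub_eq_one_iff.mp hvu
  simp only [diagonal, Set.mem_ofPred_eq, Prod.mk.injEq] at hvF huF hvu'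
  refine ⟨⟨(x - (y' - y), y - (x' - x)), mem_HDverts.mpr (by omega)⟩,
    by simp only [diagonal, Set.mem_ofPred_eq]; omega, fun h => ?_, ?_⟩
  · have := congrArg (fun w : Vertex m n => w.1.1) h
    simp only at this
    omega
  · exact Int.abs_sub_add_abs_sub_eq_one_iff.mpr (by simp only [Prod.mk.injEq]; omega)

lemma add_le_ncard_of_isZeroForcingSet {B : Set (Vertex m n)}
    (hB : IsZeroForcingSet (HD m n) B) : m + n ≤ B.ncard := by
  have := hB.card_le_ncard
    (F := Sum.elim (fun k : Fin n => antidiagonal m n k) (fun k : Fin m => diagonal m n k))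
    (by rintro (k | k); exacts [isFort_antidiagonal k.2, isFort_diagonal k.2]) ?_
  · simpa [add_comm] using this
  rintro (k | k) (l | l) hkl <;>
    simp only [Function.onFun, Sum.elim_inl, Sum.elim_inr, Set.disjoint_left, antidiagonal,
      diagonal, Set.mem_ofPred_eq, ne_eq, Sum.inl.injEq, Sum.inr.injEq, ← Fin.val_inj] at hkl ⊢ <;>
    intro v hv hv' <;> omega

end HD

theorem zfNumber_eq_one_leaky_HD_general (m n : ℕ) :
    zfNumber (HD m n) = m + n ∧ leakyNumber (HD m n) 1 = m + n := by
  have hleaky : IsLeakyForcingSet (HD m n) 1 (HD.rowStarts m n) := HD.isLeakyForcingSet_rowStarts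
  refine ⟨IsLeast.csInf_eq ⟨⟨_, hleaky.isZeroForcingSet, HD.ncard_rowStarts⟩, ?_⟩,
    IsLeast.csInf_eq ⟨⟨_, hleaky, HD.ncard_rowStarts⟩, ?_⟩⟩
  · rintro _ ⟨B, hB, rfl⟩
    exact HD.add_le_ncard_of_isZeroForcingSet hB
  · rintro _ ⟨B, hB, rfl⟩
    exact HD.add_le_ncard_of_isZeroForcingSet hB.isZeroForcingSet

/-- The zero forcing number and the `1`-leaky forcing number of `HD(m,n)` are
equal, and both equal `m + n`. -/
theorem zfNumber_eq_one_leaky_HD (m n : ℕ) (hm : 0 < m) (hn : 0 < n) :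
    zfNumber (HD m n) = m + n ∧ leakyNumber (HD m n) 1 = m + n :=
  zfNumber_eq_one_leaky_HD_general m n
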